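/- arXiv:2502.12353 — 3 statements merged into one kernel-verified Lean document; each statement's English description precedes it below -/
import Mathlib

section
/- Let Q = N(m, diag(σ²)) and Q̄ = N(m̄, diag(σ̄²)) be d-dimensional diagonal Gaussians with all coordinates of σ and σ̄ bounded below by σ₀ > 0. Then KL(Q ∥ Q̄) ≤ 2‖σ−σ̄‖₁/σ₀ + ‖σ−σ̄‖₂²/(2σ₀²) + ‖m̄−m‖₂²/(2σ₀²). -/
/-! Coordinatewise: `log σ - log σ̄ ≤ (σ - σ̄)/σ̄` by `log x ≤ x - 1`, and writing
`u = (σ̄ - σ)/σ` the variance term is `(σ̄²/σ² - 1)/2 = u + u²/2`; each piece, as well as the mean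
term, is then bounded by replacing the denominators `σ`, `σ̄` with `σ₀`. Summing over the
coordinates gives the claim. -/

open Finset

namespace Real

lemma log_sub_log_le_abs_sub_div {s t t₀ : ℝ} (ht₀ : 0 < t₀) (ht : t₀ ≤ t) (hs : 0 < s) :
    log s - log t ≤ |s - t| / t₀ := by
  have ht0 : 0 < t := ht₀.trans_le ht
  calc log s - log t = log (s / t) := (log_div hs.ne' ht0.ne').symm
    _ ≤ s / t - 1 := log_le_sub_one_of_pos (div_pos hs ht0)
    _ = (s - t) / t := by field_simp
    _ ≤ |s - t| / t := by gcongr; exact le_abs_self _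
    _ ≤ |s - t| / t₀ := by gcongr

end Real

lemma half_mul_sq_div_sq_sub_one_le {s t s₀ : ℝ} (hs₀ : 0 < s₀) (hs : s₀ ≤ s) :
    (1 / 2) * (t ^ 2 / s ^ 2 - 1) ≤ |s - t| / s₀ + (s - t) ^ 2 / (2 * s₀ ^ 2) := by
  have hs0 : 0 < s := hs₀.trans_le hs
  have hlin : (t - s) / s ≤ |s - t| / s₀ :=
    calc (t - s) / s ≤ |s - t| / s := by gcongr; rw [abs_sub_comm]; exact le_abs_self _
      _ ≤ |s - t| / s₀ := by gcongr
  have hsq : (s - t) ^ 2 / s ^ 2 ≤ (s - t) ^ 2 / s₀ ^ 2 := by gcongr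
  calc (1 / 2) * (t ^ 2 / s ^ 2 - 1) = (t - s) / s + (1 / 2) * ((s - t) ^ 2 / s ^ 2) := by
        field_simp; ring
    _ ≤ |s - t| / s₀ + (1 / 2) * ((s - t) ^ 2 / s₀ ^ 2) := by gcongr
    _ = |s - t| / s₀ + (s - t) ^ 2 / (2 * s₀ ^ 2) := by ring

lemma klGauss_coord_le {s t c σ₀ : ℝ} (hσ₀ : 0 < σ₀) (hs : σ₀ ≤ s) (ht : σ₀ ≤ t) (hc : 0 ≤ c) :
    (Real.log s - Real.log t) + (1 / 2) * (t ^ 2 / s ^ 2 - 1 + c / s ^ 2)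
      ≤ 2 * |s - t| / σ₀ + (s - t) ^ 2 / (2 * σ₀ ^ 2) + c / (2 * σ₀ ^ 2) := by
  have hlog := Real.log_sub_log_le_abs_sub_div hσ₀ ht (hσ₀.trans_le hs)
  have hvar := half_mul_sq_div_sq_sub_one_le (t := t) hσ₀ hs
  have hmean : c / (2 * s ^ 2) ≤ c / (2 * σ₀ ^ 2) := by gcongr
  calc (Real.log s - Real.log t) + (1 / 2) * (t ^ 2 / s ^ 2 - 1 + c / s ^ 2)
      = (Real.log s - Real.log t) + (1 / 2) * (t ^ 2 / s ^ 2 - 1) + c / (2 * s ^ 2) := by ring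
    _ ≤ |s - t| / σ₀ + (|s - t| / σ₀ + (s - t) ^ 2 / (2 * σ₀ ^ 2)) + c / (2 * σ₀ ^ 2) := by
        gcongr
    _ = 2 * |s - t| / σ₀ + (s - t) ^ 2 / (2 * σ₀ ^ 2) + c / (2 * σ₀ ^ 2) := by ring

theorem klGaussDiag_le (d : ℕ) (m mb σ σb : Fin d → ℝ) (σ₀ : ℝ) (hσ₀ : 0 < σ₀)
    (hσ : ∀ i, σ₀ ≤ σ i) (hσb : ∀ i, σ₀ ≤ σb i) :
    -- KL(N(m, diag σ²) ∥ N(mb, diag σb²)), in the closed form used in the paper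
    ((∑ i, (Real.log (σ i) - Real.log (σb i))) +
        (1 / 2) * ((∑ i, (σb i) ^ 2 / (σ i) ^ 2) - d + ∑ i, (mb i - m i) ^ 2 / (σ i) ^ 2))
      ≤ 2 * (∑ i, |σ i - σb i|) / σ₀
          + (∑ i, (σ i - σb i) ^ 2) / (2 * σ₀ ^ 2)
          + (∑ i, (mb i - m i) ^ 2) / (2 * σ₀ ^ 2) := by
  have hd : (d : ℝ) = ∑ _i : Fin d, (1 : ℝ) := by simp
  calc _ = ∑ i, ((Real.log (σ i) - Real.log (σb i)) +
          (1 / 2) * ((σb i) ^ 2 / (σ i) ^ 2 - 1 + (mb i - m i) ^ 2 / (σ i) ^ 2)) := by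
        rw [hd, ← sum_sub_distrib, ← sum_add_distrib, mul_sum, sum_add_distrib]
    _ ≤ ∑ i, (2 * |σ i - σb i| / σ₀ + (σ i - σb i) ^ 2 / (2 * σ₀ ^ 2)
          + (mb i - m i) ^ 2 / (2 * σ₀ ^ 2)) :=
        sum_le_sum fun i _ => klGauss_coord_le hσ₀ (hσ i) (hσb i) (sq_nonneg _)
    _ = _ := by rw [sum_add_distrib, sum_add_distrib, mul_sum, sum_div, sum_div, sum_div]
end

section
/- With learning rate α_t = c/((t+2)log(t+2)) and gradients bounded by β (so per-step perturbation contribution is at most 2β), the unrolled SGD stability bound satisfies (1/n) Σ_{t=1}^{T} (log(T+1)/log(t+2)) α_t · 2β ≤ (2cβ log(T+1))/(n log 2), i.e., the expected parameter difference is O(log T / n). -/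
/-! The summand factors as `2cβ log(T+1) · 1/((t+2) log²(t+2))`, and the sum of the second factor
telescopes: since `log(a+1) - log a ≥ 1/(a+1)`, each term is at most `1/log a - 1/log(a+1)`
(a discrete form of `∫ dt/(t log² t) = -1/log t`), so the whole sum is at most `1/log 2`. -/

open Finset Real

lemma inv_add_one_le_log_add_one_sub_log {a : ℝ} (ha : 0 < a) :
    1 / (a + 1) ≤ log (a + 1) - log a := by
  have h := one_sub_inv_le_log_of_pos (show 0 < (a + 1) / a by positivity)
  rw [log_div (by positivity) ha.ne', inv_div] at h
  calc 1 / (a + 1) = 1 - a / (a + 1) := by field_simp; ring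
    _ ≤ log (a + 1) - log a := h

lemma one_div_mul_log_sq_le_sub {a : ℝ} (ha : 1 < a) :
    1 / ((a + 1) * log (a + 1) ^ 2) ≤ 1 / log a - 1 / log (a + 1) := by
  have hla : 0 < log a := log_pos ha
  have hle : log a ≤ log (a + 1) := log_le_log (by linarith) (by linarith)
  have hla1 : 0 < log (a + 1) := hla.trans_le hle
  calc 1 / ((a + 1) * log (a + 1) ^ 2)
      ≤ 1 / (a + 1) / (log a * log (a + 1)) := by
        rw [div_div, sq]
        gcongr
    _ ≤ (log (a + 1) - log a) / (log a * log (a + 1)) := by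
        gcongr
        exact inv_add_one_le_log_add_one_sub_log (by linarith)
    _ = 1 / log a - 1 / log (a + 1) := by
        field_simp

lemma sum_Icc_one_div_mul_log_sq_le_sub (T : ℕ) :
    ∑ t ∈ Icc 1 T, 1 / (((t : ℝ) + 2) * log ((t : ℝ) + 2) ^ 2)
      ≤ 1 / log 2 - 1 / log ((T : ℝ) + 2) := by
  induction T with
  | zero => norm_num
  | succ T ih =>
    rw [sum_Icc_succ_top (by omega)]
    have hstep :=
      one_div_mul_log_sq_le_sub (a := (T : ℝ) + 2) (by linarith [T.cast_nonneg (α := ℝ)])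
    push_cast
    rw [show (T : ℝ) + 2 + 1 = (T : ℝ) + 1 + 2 by ring] at hstep
    linarith

lemma sum_Icc_one_div_mul_log_sq_le (T : ℕ) :
    ∑ t ∈ Icc 1 T, 1 / (((t : ℝ) + 2) * log ((t : ℝ) + 2) ^ 2) ≤ 1 / log 2 := by
  have hlog : 0 < log ((T : ℝ) + 2) := log_pos (by linarith [T.cast_nonneg (α := ℝ)])
  linarith [sum_Icc_one_div_mul_log_sq_le_sub T, one_div_pos.mpr hlog]

open Finset in
theorem stability_sum_le_general (c β : ℝ) (hc : 0 < c) (hβ : 0 < β) (n : ℕ) (T : ℕ) :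
    (1 / (n : ℝ)) * ∑ t ∈ Finset.Icc 1 T,
        (Real.log ((T : ℝ) + 1) / Real.log ((t : ℝ) + 2)) *
          (c / (((t : ℝ) + 2) * Real.log ((t : ℝ) + 2))) * (2 * β)
      ≤ 2 * c * β * Real.log ((T : ℝ) + 1) / ((n : ℝ) * Real.log 2) := by
  set K := 2 * c * β * log ((T : ℝ) + 1) / n
  have hK : 0 ≤ K := by
    have : 0 ≤ log ((T : ℝ) + 1) := log_nonneg (by simp)
    positivity
  calc (1 / (n : ℝ)) * ∑ t ∈ Icc 1 T,
        (log ((T : ℝ) + 1) / log ((t : ℝ) + 2)) *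
          (c / (((t : ℝ) + 2) * log ((t : ℝ) + 2))) * (2 * β)
      = K * ∑ t ∈ Icc 1 T, 1 / (((t : ℝ) + 2) * log ((t : ℝ) + 2) ^ 2) := by
        rw [mul_sum, mul_sum]
        refine sum_congr rfl fun t _ => ?_
        have hlog : log ((t : ℝ) + 2) ≠ 0 :=
          (log_pos (by linarith [t.cast_nonneg (α := ℝ)])).ne'
        simp only [K]
        field_simp
    _ ≤ K * (1 / log 2) := mul_le_mul_of_nonneg_left (sum_Icc_one_div_mul_log_sq_le T) hK
    _ = 2 * c * β * log ((T : ℝ) + 1) / ((n : ℝ) * log 2) := by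
        rw [mul_one_div, div_div]

open Finset in
theorem stability_sum_le (c β : ℝ) (hc : 0 < c) (hβ : 0 < β) (n : ℕ) (hn : 1 ≤ n) (T : ℕ) :
    (1 / (n : ℝ)) * ∑ t ∈ Finset.Icc 1 T,
        (Real.log ((T : ℝ) + 1) / Real.log ((t : ℝ) + 2)) *
          (c / (((t : ℝ) + 2) * Real.log ((t : ℝ) + 2))) * (2 * β)
      ≤ 2 * c * β * Real.log ((T : ℝ) + 1) / ((n : ℝ) * Real.log 2) :=
  stability_sum_le_general c β hc hβ n T
end

section
/- Bayes-stability decomposition of generalization error: for an order-independent algorithm with single-point posteriors Q_z (the expected output when the n-th training point is z), the expected generalization error equals E_{z,z̄∼D}[E_{w∼Q_{z̄}}[L(w,z)] − E_{w∼Q_z}[L(w,z)]], i.e., E_S E_{w∼Q_S}[L(w,D) − L(w,S)] admits this two-point representation. -/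
/-!
Exchangeability of the i.i.d. sample together with order-independence of `Q` makes every summand
of the empirical risk contribute as much as the last one. Replacing the last sample point by an
independent `z̄ ∼ D` does not change the law of the sample: applied to the population risk this
turns `E_S E_{Q_S} L(w, z)` into `E_{z, z̄} E_{Q_{z̄}} L(w, z)`, and applied to the last summand it
turns `E_S E_{Q_S} L(w, z_n)` into `E_z E_{Q_z} L(w, z)`.
-/

open MeasureTheory Finset

namespace MeasureTheory

section Resample

variable {ι : Type*} [Fintype ι] [DecidableEq ι] {α : ι → Type*} [∀ i, MeasurableSpace (α i)]
  (μ : ∀ i, Measure (α i)) [∀ i, IsProbabilityMeasure (μ i)]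

theorem Measure.map_update_prod_pi (i : ι) :
    ((μ i).prod (Measure.pi μ)).map (fun p => Function.update p.2 i p.1) = Measure.pi μ := by
  refine (Measure.pi_eq fun s hs => ?_).symm
  have hpre : (fun p : α i × (∀ j, α j) => Function.update p.2 i p.1) ⁻¹' Set.univ.pi s
      = s i ×ˢ Set.univ.pi (Function.update s i Set.univ) := by
    ext ⟨x, S⟩
    simp only [Set.mem_preimage, Set.mem_univ_pi, Set.mem_prod]
    constructor
    · intro h
      refine ⟨by simpa using h i, fun j => ?_⟩
      rcases eq_or_ne j i with rfl | hj
      · simp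
      · simpa [hj] using h j
    · rintro ⟨hx, hS⟩ j
      rcases eq_or_ne j i with rfl | hj
      · simpa using hx
      · simpa [hj] using hS j
  have hT : Measurable fun p : α i × (∀ j, α j) => Function.update p.2 i p.1 := by fun_prop
  rw [Measure.map_apply hT (MeasurableSet.univ_pi hs), hpre, Measure.prod_prod, Measure.pi_pi,
    ← mul_prod_erase _ _ (mem_univ i), ← mul_prod_erase univ (fun j => μ j (s j)) (mem_univ i),
    Function.update_self, measure_univ, one_mul]
  congr 1
  exact prod_congr rfl fun j hj => by rw [Function.update_of_ne (ne_of_mem_erase hj)]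

theorem integral_pi_eq_integral_integral_update {E : Type*} [NormedAddCommGroup E]
    [NormedSpace ℝ E] {f : (∀ j, α j) → E} (hf : Integrable f (Measure.pi μ)) (i : ι) :
    ∫ S, f S ∂Measure.pi μ = ∫ x, ∫ S, f (Function.update S i x) ∂Measure.pi μ ∂μ i := by
  have hT : Measurable fun p : α i × (∀ j, α j) => Function.update p.2 i p.1 := by fun_prop
  rw [← Measure.map_update_prod_pi μ i] at hf
  conv_lhs => rw [← Measure.map_update_prod_pi μ i]
  rw [integral_map hT.aemeasurable hf.aestronglyMeasurable]
  exact integral_prod (fun p => f (Function.update p.2 i p.1)) (hf.comp_measurable hT)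

end Resample

section Exchangeable

variable {ι Z E : Type*} [Fintype ι] [MeasurableSpace Z] (μ : Measure Z) [IsProbabilityMeasure μ]
  [NormedAddCommGroup E] [NormedSpace ℝ E]

theorem integral_comp_perm_pi (f : (ι → Z) → E) (e : Equiv.Perm ι) :
    ∫ S, f (S ∘ e) ∂Measure.pi (fun _ => μ) = ∫ S, f S ∂Measure.pi (fun _ => μ) :=
  (measurePreserving_arrowCongr' (fun _ => μ) (fun _ => μ) e.symm (MeasurableEquiv.refl Z)
    fun _ => MeasurePreserving.id μ).integral_comp' f

theorem integral_eval_eq_of_comp_perm [DecidableEq ι] {G : Z → (ι → Z) → E}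
    (hG : ∀ z S (e : Equiv.Perm ι), G z (S ∘ e) = G z S) (i j : ι) :
    ∫ S, G (S i) S ∂Measure.pi (fun _ => μ) = ∫ S, G (S j) S ∂Measure.pi (fun _ => μ) := by
  rw [← integral_comp_perm_pi μ _ (Equiv.swap i j)]
  simp [hG]

theorem integral_inv_card_mul_sum_eval [DecidableEq ι] {G : Z → (ι → Z) → ℝ}
    (hG : ∀ z S (e : Equiv.Perm ι), G z (S ∘ e) = G z S)
    (hint : ∀ j, Integrable (fun S => G (S j) S) (Measure.pi fun _ => μ)) (i : ι) :
    ∫ S, (Fintype.card ι : ℝ)⁻¹ * ∑ j, G (S j) S ∂Measure.pi (fun _ => μ)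
      = ∫ S, G (S i) S ∂Measure.pi (fun _ => μ) := by
  have hcard : (Fintype.card ι : ℝ) ≠ 0 := Nat.cast_ne_zero.2 (Fintype.card_pos_iff.2 ⟨i⟩).ne'
  rw [integral_const_mul, integral_finsetSum _ fun j _ => hint j,
    sum_congr rfl fun j _ => integral_eval_eq_of_comp_perm μ hG j i, sum_const, card_univ,
    nsmul_eq_mul, inv_mul_cancel_left₀ hcard]

end Exchangeable

theorem Measure.measurable_of_measurable_integral {X Y : Type*} [MeasurableSpace X]
    [MeasurableSpace Y] {Q : X → Measure Y} [∀ x, IsFiniteMeasure (Q x)]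
    (h : ∀ f : Y → ℝ, Measurable f → Measurable fun x => ∫ y, f y ∂Q x) : Measurable Q := by
  refine Measure.measurable_of_measurable_coe _ fun s hs => ?_
  simpa [integral_indicator_one hs] using
    (h (s.indicator 1) (measurable_const.indicator hs)).ennreal_ofReal

theorem measurable_integral_of_measurable_measure {X Y Z : Type*} [MeasurableSpace X]
    [MeasurableSpace Y] [MeasurableSpace Z] {Q : X → Measure Y} [∀ x, IsProbabilityMeasure (Q x)]
    (hQ : Measurable Q) {L : Y → Z → ℝ} (hL : Measurable (Function.uncurry L)) :
    Measurable fun p : Z × X => ∫ y, L y p.1 ∂Q p.2 := by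
  let κ : ProbabilityTheory.Kernel X Y := ⟨Q, hQ⟩
  have : ProbabilityTheory.IsMarkovKernel κ := ⟨inferInstance⟩
  have hf : Measurable (Function.uncurry fun (p : Z × X) (y : Y) => L y p.1) := by fun_prop
  exact (hf.stronglyMeasurable.integral_kernel_prod_right
    (κ := κ.comap Prod.snd measurable_snd)).measurable

section Decomposition

variable {ι Z : Type*} [Fintype ι] [DecidableEq ι] [MeasurableSpace Z] (μ : Measure Z)
  [IsProbabilityMeasure μ]

theorem integral_integral_sub_diag {F : Z → Z → ℝ} (hF : Measurable (Function.uncurry F)) {C : ℝ}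
    (hFC : ∀ x y, ‖F x y‖ ≤ C) :
    ∫ y, ∫ x, (F x y - F y y) ∂μ ∂μ = ∫ y, ∫ x, F x y ∂μ ∂μ - ∫ y, F y y ∂μ := by
  have hF_diag : Measurable fun y => F y y := hF.comp (f := fun y => (y, y)) (by fun_prop)
  have hint_avg : Integrable (fun y => ∫ x, F x y ∂μ) μ := by
    refine .of_bound hF.stronglyMeasurable.integral_prod_left.aestronglyMeasurable C
      (ae_of_all _ fun y => ?_)
    simpa using norm_integral_le_of_norm_le_const (μ := μ) (ae_of_all _ fun x => hFC x y)
  rw [← integral_sub hint_avg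
    (.of_bound hF_diag.aestronglyMeasurable C (ae_of_all _ fun y => hFC y y))]
  refine integral_congr_ae (ae_of_all _ fun y => ?_)
  simp [integral_sub (.of_bound hF.of_uncurry_right.aestronglyMeasurable C
    (ae_of_all _ fun x => hFC x y)) (integrable_const _)]

theorem integral_sub_average_eq_integral_integral_update {G : Z → (ι → Z) → ℝ}
    (hGm : Measurable (Function.uncurry G)) {C : ℝ} (hGC : ∀ z S, ‖G z S‖ ≤ C)
    (hG : ∀ z S (e : Equiv.Perm ι), G z (S ∘ e) = G z S) (i : ι) :
    ∫ S, (∫ z, G z S ∂μ - (Fintype.card ι : ℝ)⁻¹ * ∑ j, G (S j) S) ∂Measure.pi (fun _ => μ)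
      = ∫ z, ∫ zb, (∫ S, G z (Function.update S i zb) ∂Measure.pi (fun _ => μ)
          - ∫ S, G z (Function.update S i z) ∂Measure.pi (fun _ => μ)) ∂μ ∂μ := by
  set P := Measure.pi fun _ : ι => μ
  set A : Z → Z → ℝ := fun zb z => ∫ S, G z (Function.update S i zb) ∂P
  have hG_swap : Measurable fun p : (ι → Z) × Z => G p.2 p.1 := hGm.comp measurable_swap
  have hG_eval : ∀ j, Measurable fun S : ι → Z => G (S j) S := fun j =>
    hGm.comp (f := fun S : ι → Z => (S j, S)) (by fun_prop)
  have hA : Measurable (Function.uncurry A) :=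
    (hGm.comp (f := fun q : (Z × Z) × (ι → Z) => (q.1.2, Function.update q.2 i q.1.1))
      (by fun_prop)).stronglyMeasurable.integral_prod_right'.measurable
  have hAC : ∀ zb z, ‖A zb z‖ ≤ C := fun zb z => by
    simpa using norm_integral_le_of_norm_le_const (μ := P) (ae_of_all _ fun S => hGC z _)
  have hint_eval : ∀ j, Integrable (fun S => G (S j) S) P := fun j =>
    .of_bound (hG_eval j).aestronglyMeasurable C (ae_of_all _ fun S => hGC _ _)
  have hint_G : Integrable (fun p : (ι → Z) × Z => G p.2 p.1) (P.prod μ) :=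
    .of_bound hG_swap.aestronglyMeasurable C (ae_of_all _ fun p => hGC _ _)
  have h_risk : ∫ S, ∫ z, G z S ∂μ ∂P = ∫ z, ∫ zb, A zb z ∂μ ∂μ := by
    rw [integral_integral_swap hint_G]
    refine integral_congr_ae (ae_of_all _ fun z => ?_)
    exact integral_pi_eq_integral_integral_update (fun _ => μ)
      (.of_bound hGm.of_uncurry_left.aestronglyMeasurable C (ae_of_all _ fun S => hGC z S)) i
  have h_diag : ∫ S, G (S i) S ∂P = ∫ z, A z z ∂μ := by
    rw [integral_pi_eq_integral_integral_update (fun _ => μ) (hint_eval i) i]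
    simp only [Function.update_self, A, P]
  calc ∫ S, (∫ z, G z S ∂μ - (Fintype.card ι : ℝ)⁻¹ * ∑ j, G (S j) S) ∂P
      = ∫ S, ∫ z, G z S ∂μ ∂P - ∫ S, G (S i) S ∂P := by
        rw [integral_sub hint_G.integral_prod_left
          ((integrable_finsetSum _ fun j _ => hint_eval j).const_mul _),
          integral_inv_card_mul_sum_eval μ hG hint_eval i]
    _ = ∫ z, ∫ zb, (A zb z - A z z) ∂μ ∂μ := by
        rw [h_risk, h_diag, integral_integral_sub_diag μ hA hAC]

end Decomposition

theorem integral_integral_sub_mul_sum {ι W Z : Type*} [Fintype ι] [MeasurableSpace W]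
    [MeasurableSpace Z] (ν : Measure W) [IsProbabilityMeasure ν] (μ : Measure Z)
    [IsProbabilityMeasure μ] {L : W → Z → ℝ} (hL : Measurable (Function.uncurry L)) {C : ℝ}
    (hLC : ∀ w z, ‖L w z‖ ≤ C) (c : ℝ) (x : ι → Z) :
    ∫ w, (∫ z, L w z ∂μ - c * ∑ j, L w (x j)) ∂ν
      = ∫ z, ∫ w, L w z ∂ν ∂μ - c * ∑ j, ∫ w, L w (x j) ∂ν := by
  have hint_eval : ∀ z, Integrable (fun w => L w z) ν := fun z =>
    .of_bound hL.of_uncurry_right.aestronglyMeasurable C (ae_of_all _ fun w => hLC w z)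
  have hint_prod : Integrable (Function.uncurry L) (ν.prod μ) :=
    .of_bound hL.aestronglyMeasurable C (ae_of_all _ fun p => hLC p.1 p.2)
  have hint_risk : Integrable (fun w => ∫ z, L w z ∂μ) ν := hint_prod.integral_prod_left
  rw [integral_sub hint_risk
      ((integrable_finsetSum _ fun j _ => hint_eval (x j)).const_mul c),
    integral_const_mul, integral_finsetSum _ fun j _ => hint_eval (x j),
    integral_integral_swap hint_prod]

end MeasureTheory

theorem bayes_stability_decomposition {Z W : Type*} [MeasurableSpace Z] [MeasurableSpace W]
    (D : Measure Z) [IsProbabilityMeasure D] (m : ℕ)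
    -- the algorithm's output distribution on parameters, as a function of the dataset
    (Q : (Fin (m + 1) → Z) → Measure W)
    (hQ : ∀ S, IsProbabilityMeasure (Q S))
    -- order-independence
    (horder : ∀ (S : Fin (m + 1) → Z) (e : Equiv.Perm (Fin (m + 1))), Q (S ∘ e) = Q S)
    (L : W → Z → ℝ) (C : ℝ) (hC : ∀ w z, |L w z| ≤ C)
    (hLmeas : Measurable (Function.uncurry L))
    (hQmeas : ∀ (f : W → ℝ), Measurable f →
      Measurable fun S : Fin (m + 1) → Z => ∫ w, f w ∂(Q S)) :
    -- the generalization error equals the two-point representation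
    (∫ S, ∫ w, ((∫ z, L w z ∂D) - (m + 1 : ℝ)⁻¹ * ∑ i, L w (S i)) ∂(Q S)
        ∂(Measure.pi fun _ : Fin (m + 1) => D))
      = ∫ z, ∫ zb,
          ((∫ S, ∫ w, L w z ∂(Q (Function.update S (Fin.last m) zb))
              ∂(Measure.pi fun _ : Fin (m + 1) => D))
            - ∫ S, ∫ w, L w z ∂(Q (Function.update S (Fin.last m) z))
              ∂(Measure.pi fun _ : Fin (m + 1) => D)) ∂D ∂D := by
  have hLC : ∀ w z, ‖L w z‖ ≤ C := fun w z => (Real.norm_eq_abs _).trans_le (hC w z)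
  let G : Z → (Fin (m + 1) → Z) → ℝ := fun z S => ∫ w, L w z ∂Q S
  have hGm : Measurable (Function.uncurry G) :=
    measurable_integral_of_measurable_measure (Measure.measurable_of_measurable_integral hQmeas)
      hLmeas
  have hGC : ∀ z S, ‖G z S‖ ≤ C := fun z S => by
    simpa using norm_integral_le_of_norm_le_const (μ := Q S) (ae_of_all _ fun w => hLC w z)
  have hG : ∀ z S (e : Equiv.Perm (Fin (m + 1))), G z (S ∘ e) = G z S := fun z S e => by
    simp only [G, horder]
  simp_rw [integral_integral_sub_mul_sum _ D hLmeas hLC]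
  simpa using integral_sub_average_eq_integral_integral_update D hGm hGC hG (Fin.last m)
end
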